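/- arXiv:quant-ph/0305005 — 2 statements merged into one kernel-verified Lean document; each statement's English description precedes it below -/
import Mathlib

section
/- Let λ, μ > 0 with λμ = 1 and λ ≠ 1. The matrix A = x̃x̃* + Σ_{i=1}^3 ỹᵢỹᵢ* (with x = I₃, y₁ = λe₁₂ + μe₂₁, y₂ = λe₂₃ + μe₃₂, y₃ = μe₁₃ + λe₃₁) is not separable: A cannot be written as a finite sum Σ_k z̃_k z̃_k* with each z_k ∈ M₃ of rank at most 1. -/
open Matrix BigOperators
open scoped ComplexOrder

noncomputable section

/-- vectorization `z̃` of an `m×n` matrix, as an element of `ℂ^n ⊗ ℂ^m`. -/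
def vecz {m n : ℕ} (z : Matrix (Fin m) (Fin n) ℂ) : Fin n × Fin m → ℂ :=
  fun p => z p.2 p.1

/-- the rank-one block matrix `z̃ z̃* ∈ M_n ⊗ M_m`. -/
def vv {m n : ℕ} (z : Matrix (Fin m) (Fin n) ℂ) :
    Matrix (Fin n × Fin m) (Fin n × Fin m) ℂ :=
  fun p q => vecz z p * star (vecz z q)

/-- partial (block) transpose on `M_n ⊗ M_m`. -/
def ptrans {m n : ℕ} (A : Matrix (Fin n × Fin m) (Fin n × Fin m) ℂ) :
    Matrix (Fin n × Fin m) (Fin n × Fin m) ℂ :=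
  fun p q => A (p.1, q.2) (q.1, p.2)

/-- the bilinear pairing `⟨A, φ⟩ = Σ_{i,j} Tr(φ(e_{ij}) a_{ij}ᵗ)`. -/
def pair {m n : ℕ} (A : Matrix (Fin n × Fin m) (Fin n × Fin m) ℂ)
    (φ : Matrix (Fin m) (Fin m) ℂ → Matrix (Fin n) (Fin n) ℂ) : ℂ :=
  ∑ i : Fin m, ∑ j : Fin m, ∑ k : Fin n, ∑ l : Fin n,
    φ (Matrix.single i j 1) k l * A (k, i) (l, j)

/-- `φ_V : X ↦ V* X V`. -/
def phiV {m n : ℕ} (V : Matrix (Fin m) (Fin n) ℂ) :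
    Matrix (Fin m) (Fin m) ℂ → Matrix (Fin n) (Fin n) ℂ :=
  fun X => Vᴴ * X * V

/-- `φ^W : X ↦ W* Xᵗ W`. -/
def phiW {m n : ℕ} (W : Matrix (Fin m) (Fin n) ℂ) :
    Matrix (Fin m) (Fin m) ℂ → Matrix (Fin n) (Fin n) ℂ :=
  fun X => Wᴴ * Xᵀ * W

/-- the map `Φ[a,b,c] : M₃ → M₃` of Cho–Kye–Lee. -/
def Phi (a b c : ℝ) : Matrix (Fin 3) (Fin 3) ℂ → Matrix (Fin 3) (Fin 3) ℂ :=
  fun x => Matrix.diagonal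
    ![(a : ℂ) * x 0 0 + (b : ℂ) * x 1 1 + (c : ℂ) * x 2 2,
      (a : ℂ) * x 1 1 + (b : ℂ) * x 2 2 + (c : ℂ) * x 0 0,
      (a : ℂ) * x 2 2 + (b : ℂ) * x 0 0 + (c : ℂ) * x 1 1] - x

/-- `y₁ = λe₁₂+μe₂₁`, `y₂ = λe₂₃+μe₃₂`, `y₃ = μe₁₃+λe₃₁`. -/
def yMat (lam mu : ℝ) : Fin 3 → Matrix (Fin 3) (Fin 3) ℂ :=
  ![!![0, (lam : ℂ), 0; (mu : ℂ), 0, 0; 0, 0, 0],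
    !![0, 0, 0; 0, 0, (lam : ℂ); 0, (mu : ℂ), 0],
    !![0, 0, (mu : ℂ); 0, 0, 0; (lam : ℂ), 0, 0]]

/-- the PPT entangled state `A = x̃x̃* + Σᵢ ỹᵢỹᵢ*` with `x = I₃`. -/
def Amat (lam mu : ℝ) : Matrix (Fin 3 × Fin 3) (Fin 3 × Fin 3) ℂ :=
  vv (1 : Matrix (Fin 3) (Fin 3) ℂ) + ∑ i : Fin 3, vv (yMat lam mu i)

/-! The maps `Φ[2,0,1]` and `Φ[2,1,0]` are positive, so they pair nonnegatively with every
separable state: for `z = u vᵀ`, bounding `|tr z| ≤ Σ |uᵢ||vᵢ|` reduces the pairing with `z̃z̃*`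
to a Choi-type inequality between the real numbers `|uᵢ|, |vⱼ|`. Pairing them with `A`
gives `3(λ² - 1)` and `3(μ² - 1)`, which cannot both be nonnegative when `λμ = 1`, `λ > 0`,
`λ ≠ 1`. -/

theorem Matrix.exists_eq_vecMulVec_of_rank_le_one {K m n : Type*} [Field K] [Fintype m]
    [Fintype n] [DecidableEq n] {z : Matrix m n K} (h : z.rank ≤ 1) :
    ∃ u v, z = vecMulVec u v := by
  obtain ⟨u, hu⟩ := finrank_le_one_iff.mp h
  have hcol : ∀ j, ∃ c : K, z.col j = c • (u : m → K) := fun j => by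
    obtain ⟨c, hc⟩ := hu ⟨z *ᵥ Pi.single j 1, LinearMap.mem_range_self _ _⟩
    exact ⟨c, by rw [← mulVec_single_one]; exact (congrArg Subtype.val hc).symm⟩
  choose c hc using hcol
  refine ⟨u, c, ext fun i j => ?_⟩
  simpa [vecMulVec_apply, mul_comm] using congrFun (hc j) i

theorem pair_add {m n : ℕ} (A B : Matrix (Fin n × Fin m) (Fin n × Fin m) ℂ)
    (φ : Matrix (Fin m) (Fin m) ℂ → Matrix (Fin n) (Fin n) ℂ) :
    pair (A + B) φ = pair A φ + pair B φ := by
  simp only [pair, Matrix.add_apply, mul_add, Finset.sum_add_distrib]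

theorem pair_sum {m n N : ℕ} (A : Fin N → Matrix (Fin n × Fin m) (Fin n × Fin m) ℂ)
    (φ : Matrix (Fin m) (Fin m) ℂ → Matrix (Fin n) (Fin n) ℂ) :
    pair (∑ k, A k) φ = ∑ k, pair (A k) φ :=
  map_sum (AddMonoidHom.mk' (pair · φ) (pair_add · · φ)) A Finset.univ

theorem pair_sum_vv_nonneg {m n N : ℕ}
    {φ : Matrix (Fin m) (Fin m) ℂ → Matrix (Fin n) (Fin n) ℂ}
    (hφ : ∀ z : Matrix (Fin m) (Fin n) ℂ, z.rank ≤ 1 → 0 ≤ pair (vv z) φ)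
    {z : Fin N → Matrix (Fin m) (Fin n) ℂ} (hz : ∀ k, (z k).rank ≤ 1) :
    0 ≤ pair (∑ k, vv (z k)) φ := by
  rw [pair_sum]
  exact Finset.sum_nonneg fun k _ => hφ (z k) (hz k)

open Complex in
theorem pair_vv_Phi (a b c : ℝ) (z : Matrix (Fin 3) (Fin 3) ℂ) :
    pair (vv z) (Phi a b c) =
      ((a * (normSq (z 0 0) + normSq (z 1 1) + normSq (z 2 2))
        + b * (normSq (z 0 2) + normSq (z 1 0) + normSq (z 2 1))
        + c * (normSq (z 0 1) + normSq (z 1 2) + normSq (z 2 0))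
        - normSq z.trace : ℝ) : ℂ) := by
  push_cast
  simp only [← mul_conj]
  simp [pair, vv, vecz, Phi, Fin.sum_univ_three, single, diagonal, trace]
  ring

theorem pair_vv_transpose_Phi (a b c : ℝ) (z : Matrix (Fin 3) (Fin 3) ℂ) :
    pair (vv zᵀ) (Phi a b c) = pair (vv z) (Phi a c b) := by
  rw [pair_vv_Phi, pair_vv_Phi, trace_transpose]
  simp only [transpose_apply]
  ring_nf

theorem pair_Amat_Phi (lam mu a b c : ℝ) :
    pair (Amat lam mu) (Phi a b c) =
      ((3 * a - 9 + 3 * b * mu ^ 2 + 3 * c * lam ^ 2 : ℝ) : ℂ) := by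
  rw [Amat, pair_add, pair_sum, Fin.sum_univ_three]
  simp only [pair_vv_Phi]
  simp [yMat, trace, Fin.sum_univ_three, one_apply]
  ring

theorem sq_dot_le_choi (a₀ a₁ a₂ b₀ b₁ b₂ : ℝ) :
    (a₀ * b₀ + a₁ * b₁ + a₂ * b₂) ^ 2 ≤
      2 * (a₀ ^ 2 * b₀ ^ 2 + a₁ ^ 2 * b₁ ^ 2 + a₂ ^ 2 * b₂ ^ 2)
        + (a₀ ^ 2 * b₁ ^ 2 + a₁ ^ 2 * b₂ ^ 2 + a₂ ^ 2 * b₀ ^ 2) := by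
  rcases eq_or_ne b₁ 0 with rfl | hb₁
  · nlinarith [sq_nonneg (a₀ * b₀ - a₂ * b₂), sq_nonneg (a₁ * b₂), sq_nonneg (a₂ * b₀)]
  have hm : 0 < b₀ ^ 2 + b₁ ^ 2 := by positivity
  have hD : 0 < b₁ ^ 4 + b₁ ^ 2 * b₂ ^ 2 + b₀ ^ 2 * b₂ ^ 2 := by positivity
  -- Completing the square in `a` (pivots `b₀² + b₁²`, then `hD`) leaves `hdet · a₂²`;
  -- `hdet` is AM-GM for `b₀²b₁⁴, b₁²b₂⁴, b₂²b₀⁴`.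
  have hdet : 0 ≤ b₀ ^ 2 * b₁ ^ 4 + b₁ ^ 2 * b₂ ^ 4 + b₂ ^ 2 * b₀ ^ 4
      - 3 * (b₀ ^ 2 * b₁ ^ 2 * b₂ ^ 2) := by
    have h₀ := sq_nonneg b₀
    have h₁ := sq_nonneg b₁
    have h₂ := sq_nonneg b₂
    nlinarith [mul_nonneg h₀ (sq_nonneg (b₁ ^ 2 - b₂ ^ 2)),
      mul_nonneg h₁ (sq_nonneg (b₂ ^ 2 - b₀ ^ 2)), mul_nonneg h₂ (sq_nonneg (b₀ ^ 2 - b₁ ^ 2)),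
      mul_nonneg (mul_nonneg h₀ h₁) h₂, mul_nonneg h₀ h₁, mul_nonneg h₁ h₂, mul_nonneg h₂ h₀]
  nlinarith [mul_nonneg hD.le (sq_nonneg ((b₀ ^ 2 + b₁ ^ 2) * a₀ - b₀ * b₁ * a₁ - b₀ * b₂ * a₂)),
    sq_nonneg ((b₁ ^ 4 + b₁ ^ 2 * b₂ ^ 2 + b₀ ^ 2 * b₂ ^ 2) * a₁
      - b₁ * b₂ * (2 * b₀ ^ 2 + b₁ ^ 2) * a₂),
    mul_nonneg (mul_nonneg hm.le hdet) (sq_nonneg a₂), mul_pos hm hD]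

theorem pair_vv_Phi_two_zero_one_nonneg {z : Matrix (Fin 3) (Fin 3) ℂ} (hz : z.rank ≤ 1) :
    0 ≤ pair (vv z) (Phi 2 0 1) := by
  obtain ⟨u, v, rfl⟩ := exists_eq_vecMulVec_of_rank_le_one hz
  have htrace : ‖(vecMulVec u v).trace‖ ^ 2 ≤
      (‖u 0‖ * ‖v 0‖ + ‖u 1‖ * ‖v 1‖ + ‖u 2‖ * ‖v 2‖) ^ 2 := by
    rw [trace_vecMulVec]
    gcongr
    simpa [dotProduct, Fin.sum_univ_three] using norm_sum_le Finset.univ fun i => u i * v i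
  rw [pair_vv_Phi, Complex.zero_le_real]
  simp only [vecMulVec_apply, ← Complex.sq_norm, norm_mul, mul_pow]
  linarith [sq_dot_le_choi ‖u 0‖ ‖u 1‖ ‖u 2‖ ‖v 0‖ ‖v 1‖ ‖v 2‖]

theorem pair_vv_Phi_two_one_zero_nonneg {z : Matrix (Fin 3) (Fin 3) ℂ} (hz : z.rank ≤ 1) :
    0 ≤ pair (vv z) (Phi 2 1 0) := by
  rw [← transpose_transpose z, pair_vv_transpose_Phi]
  exact pair_vv_Phi_two_zero_one_nonneg (by rwa [rank_transpose])

theorem stmt_11_general (lam mu : ℝ) (hl : 0 < lam) (hlm : lam * mu = 1)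
    (hne : lam ≠ 1) :
    ¬ ∃ (N : ℕ) (z : Fin N → Matrix (Fin 3) (Fin 3) ℂ),
        (∀ k, Matrix.rank (z k) ≤ 1) ∧ Amat lam mu = ∑ k, vv (z k) := by
  rintro ⟨N, z, hz, hA⟩
  have h₁ := pair_sum_vv_nonneg (fun _ => pair_vv_Phi_two_zero_one_nonneg) hz
  have h₂ := pair_sum_vv_nonneg (fun _ => pair_vv_Phi_two_one_zero_nonneg) hz
  rw [← hA, pair_Amat_Phi, Complex.zero_le_real] at h₁ h₂
  have hlam_sq : lam ^ 2 = 1 := by nlinarith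
  exact hne (by nlinarith)

/-- `A` is not separable: it is not a finite sum `Σ z̃ₖz̃ₖ*` with each
`zₖ` of rank at most one. -/
theorem stmt_11 (lam mu : ℝ) (hl : 0 < lam) (hm : 0 < mu) (hlm : lam * mu = 1)
    (hne : lam ≠ 1) :
    ¬ ∃ (N : ℕ) (z : Fin N → Matrix (Fin 3) (Fin 3) ℂ),
        (∀ k, Matrix.rank (z k) ≤ 1) ∧ Amat lam mu = ∑ k, vv (z k) :=
  stmt_11_general lam mu hl hlm hne
end
end

section
/- Let λ, μ > 0 with λμ = 1 and λ ≠ 1, and A = x̃x̃* + Σ_{i=1}^3 ỹᵢỹᵢ* as above (x = I₃, y₁ = λe₁₂+μe₂₁, y₂ = λe₂₃+μe₃₂, y₃ = μe₁₃+λe₃₁). Then A generates an extreme ray of the cone 𝕋 of 9×9 positive semidefinite matrices with positive semidefinite partial transpose: if B ∈ 𝕋 and A − B ∈ 𝕋, then B is a nonnegative scalar multiple of A. -/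
open Matrix BigOperators
open scoped ComplexOrder

noncomputable section

/-!
If `B` and `A - B` lie in `𝕋`, then `ker A ⊆ ker B` and, since `A^τ = A`, also `ker A ⊆ ker B^τ`.
So the rows and columns of `B`, and the rows of `B^τ`, lie in the range of `A`, which is spanned by
`x̃, ỹ₁, ỹ₂, ỹ₃`. These vectors have disjoint supports, so `B` is determined by its 16 entries at
one chosen coordinate of each support. The range conditions on the rows of `B^τ` become linear
equations among these 16 entries: the diagonal ones are proportional to those of `A`, and the
off-diagonal ones fall into three 3-cycles around which an entry gets multiplied by `λ¹²`, so they
vanish because `λ¹² ≠ 1`. Thus `B = b • A` with `b` a diagonal entry of `B`, so `b ≥ 0`.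
-/

namespace Matrix.PosSemidef

variable {𝕜 n : Type*} [RCLike 𝕜] [Fintype n]

theorem mulVec_eq_zero_of_sub_posSemidef {M N : Matrix n n 𝕜} (hM : M.PosSemidef)
    (hNM : (N - M).PosSemidef) {v : n → 𝕜} (hv : N *ᵥ v = 0) : M *ᵥ v = 0 := by
  have h := hNM.dotProduct_mulVec_nonneg v
  rw [sub_mulVec, hv, zero_sub, dotProduct_neg, neg_nonneg] at h
  exact (hM.dotProduct_mulVec_zero_iff v).mp (le_antisymm h (hM.dotProduct_mulVec_nonneg v))

end Matrix.PosSemidef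

theorem eq_mul_of_forall_dotProduct_eq_zero {ι R : Type*} [Fintype ι] [DecidableEq ι]
    [CommRing R] {M : Matrix ι ι R} {x : ι → R} (hx : ∀ v, M *ᵥ v = 0 → x ⬝ᵥ v = 0)
    {p q : ι} {c : R} (hM : ∀ i, M i p = c * M i q) : x p = c * x q := by
  have h := hx (Pi.single p 1 - Pi.single q c) (by ext i; simp [mulVec_sub, hM])
  simpa [dotProduct_sub, sub_eq_zero, mul_comm] using h

theorem ptrans_sub {m n : ℕ} (A B : Matrix (Fin n × Fin m) (Fin n × Fin m) ℂ) :
    ptrans (A - B) = ptrans A - ptrans B := rfl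

/-- Linear equations cutting out the range of `Amat lam lam⁻¹`, the span of `x̃, ỹ₁, ỹ₂, ỹ₃`. -/
structure MemRangeA (lam : ℝ) (x : Fin 3 × Fin 3 → ℂ) : Prop where
  diag₁ : x (1, 1) = x (0, 0)
  diag₂ : x (2, 2) = x (0, 0)
  offDiag₁ : x (1, 0) = (lam : ℂ) ^ 2 * x (0, 1)
  offDiag₂ : x (2, 1) = (lam : ℂ) ^ 2 * x (1, 2)
  offDiag₃ : x (0, 2) = (lam : ℂ) ^ 2 * x (2, 0)

variable {lam mu : ℝ}

theorem memRangeA_Amat (hlm : lam * mu = 1) (p : Fin 3 × Fin 3) :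
    MemRangeA lam (Amat lam mu p) := by
  have hlm' : (lam : ℂ) * mu = 1 := by exact_mod_cast hlm
  obtain ⟨k, i⟩ := p
  constructor <;> fin_cases k <;> fin_cases i <;>
    simp [Amat, vv, vecz, yMat, Fin.sum_univ_three] <;> grind

theorem ptrans_Amat (hlm : lam * mu = 1) : ptrans (Amat lam mu) = Amat lam mu := by
  have hlm' : (lam : ℂ) * mu = 1 := by exact_mod_cast hlm
  ext ⟨k, i⟩ ⟨l, j⟩
  fin_cases k <;> fin_cases i <;> fin_cases l <;> fin_cases j <;>
    simp [ptrans, Amat, vv, vecz, yMat, Fin.sum_univ_three] <;> grind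

namespace MemRangeA

variable {x y : Fin 3 × Fin 3 → ℂ}

theorem of_forall_dotProduct_eq_zero (hlm : lam * mu = 1)
    (hx : ∀ v, Amat lam mu *ᵥ v = 0 → x ⬝ᵥ v = 0) : MemRangeA lam x where
  diag₁ := by
    simpa using eq_mul_of_forall_dotProduct_eq_zero hx (c := 1)
      (by simpa using fun i => (memRangeA_Amat hlm i).diag₁)
  diag₂ := by
    simpa using eq_mul_of_forall_dotProduct_eq_zero hx (c := 1)
      (by simpa using fun i => (memRangeA_Amat hlm i).diag₂)
  offDiag₁ := eq_mul_of_forall_dotProduct_eq_zero hx fun i => (memRangeA_Amat hlm i).offDiag₁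
  offDiag₂ := eq_mul_of_forall_dotProduct_eq_zero hx fun i => (memRangeA_Amat hlm i).offDiag₂
  offDiag₃ := eq_mul_of_forall_dotProduct_eq_zero hx fun i => (memRangeA_Amat hlm i).offDiag₃

theorem row_of_ker {M : Matrix (Fin 3 × Fin 3) (Fin 3 × Fin 3) ℂ} (hlm : lam * mu = 1)
    (hker : ∀ v, Amat lam mu *ᵥ v = 0 → M *ᵥ v = 0) (p : Fin 3 × Fin 3) : MemRangeA lam (M p) :=
  of_forall_dotProduct_eq_zero hlm fun v hv => congrFun (hker v hv) p

theorem star (hx : MemRangeA lam x) : MemRangeA lam (star x) where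
  diag₁ := by simp [hx.diag₁]
  diag₂ := by simp [hx.diag₂]
  offDiag₁ := by simp [hx.offDiag₁]
  offDiag₂ := by simp [hx.offDiag₂]
  offDiag₃ := by simp [hx.offDiag₃]

theorem const_smul (c : ℂ) (hx : MemRangeA lam x) : MemRangeA lam (c • x) where
  diag₁ := by simp [hx.diag₁]
  diag₂ := by simp [hx.diag₂]
  offDiag₁ := by simp [hx.offDiag₁]; ring
  offDiag₂ := by simp [hx.offDiag₂]; ring
  offDiag₃ := by simp [hx.offDiag₃]; ring

/-- `repIdx a` is a coordinate in the support of the `a`-th vector of `x̃, ỹ₁, ỹ₂, ỹ₃`. -/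
def repIdx : Fin 4 → Fin 3 × Fin 3 := ![(0, 0), (0, 1), (1, 2), (2, 0)]

theorem ext (hx : MemRangeA lam x) (hy : MemRangeA lam y)
    (h : ∀ a, x (repIdx a) = y (repIdx a)) : x = y := by
  have h₀ : x (0, 0) = y (0, 0) := h 0
  have h₁ : x (0, 1) = y (0, 1) := h 1
  have h₂ : x (1, 2) = y (1, 2) := h 2
  have h₃ : x (2, 0) = y (2, 0) := h 3
  ext ⟨k, i⟩
  fin_cases k <;> fin_cases i <;>
    simp only [Fin.zero_eta, Fin.mk_one, Fin.reduceFinMk, hx.diag₁, hx.diag₂, hx.offDiag₁,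
      hx.offDiag₂, hx.offDiag₃, hy.diag₁, hy.diag₂, hy.offDiag₁, hy.offDiag₂, hy.offDiag₃, h₀, h₁,
      h₂, h₃]

end MemRangeA

open MemRangeA

theorem vv_isHermitian {m n : ℕ} (z : Matrix (Fin m) (Fin n) ℂ) : (vv z).IsHermitian := by
  ext p q
  simp [vv, mul_comm]

theorem Amat_isHermitian : (Amat lam mu).IsHermitian :=
  (vv_isHermitian 1).add (isSelfAdjoint_sum _ fun i _ => vv_isHermitian (yMat lam mu i))

theorem eq_zero_of_cycle {K : Type*} [Field K] {L x y z : K} (h0 : L ≠ 0) (h12 : L ^ 12 ≠ 1)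
    (hy : L ^ 2 * y = L ^ 4 * x) (hx : x = L ^ 4 * z) (hz : z = L ^ 6 * y) :
    x = 0 ∧ y = 0 ∧ z = 0 := by
  have hx0 : x = 0 := by
    have h : L ^ 2 * (L ^ 12 - 1) * x = 0 := by
      linear_combination (-L ^ 10) * hy - L ^ 2 * hx - L ^ 6 * hz
    simpa [h0, sub_eq_zero, h12] using h
  have hy0 : y = 0 := by simpa [hx0, h0] using hy
  exact ⟨hx0, hy0, by simpa [hy0] using hz⟩

structure IsCompressedToRangeA (lam : ℝ) (M : Matrix (Fin 3 × Fin 3) (Fin 3 × Fin 3) ℂ) :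
    Prop where
  row : ∀ p, MemRangeA lam (M p)
  col : ∀ q, MemRangeA lam (fun p => M p q)

namespace IsCompressedToRangeA

variable {M N : Matrix (Fin 3 × Fin 3) (Fin 3 × Fin 3) ℂ}

theorem of_isHermitian (hM : M.IsHermitian) (hrow : ∀ p, MemRangeA lam (M p)) :
    IsCompressedToRangeA lam M where
  row := hrow
  col q := by
    convert (hrow q).star using 1
    ext p
    exact (hM.apply p q).symm

theorem const_smul (c : ℂ) (hM : IsCompressedToRangeA lam M) :
    IsCompressedToRangeA lam (c • M) where
  row p := (hM.row p).const_smul c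
  col q := (hM.col q).const_smul c

theorem ext (hM : IsCompressedToRangeA lam M) (hN : IsCompressedToRangeA lam N)
    (h : ∀ a b, M (repIdx a) (repIdx b) = N (repIdx a) (repIdx b)) : M = N := by
  have hcol : ∀ b, (fun p => M p (repIdx b)) = fun p => N p (repIdx b) := fun b =>
    (hM.col _).ext (hN.col _) fun a => h a b
  ext p q
  exact congrFun ((hM.row p).ext (hN.row p) fun b => congrFun (hcol b) p) q

theorem apply_repIdx_eq_zero (hM : IsCompressedToRangeA lam M)
    (hMτ : ∀ p, MemRangeA lam (ptrans M p)) (h0 : (lam : ℂ) ≠ 0) (hlam12 : (lam : ℂ) ^ 12 ≠ 1)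
    {a b : Fin 4} (hab : a ≠ b) : M (repIdx a) (repIdx b) = 0 := by
  -- Reduced by the range relations of `M`, each relation below links two entries
  -- `M (repIdx a) (repIdx b)`; `e`, `f`, `g` are the three cycles of off-diagonal entries.
  have e₁ := (hMτ (2, 0)).offDiag₂
  have e₂ := (hMτ (2, 1)).offDiag₃
  have e₃ := (hMτ (2, 2)).offDiag₁
  have e₄ := (hMτ (0, 0)).offDiag₁
  have f₁ := (hMτ (0, 2)).offDiag₁
  have f₂ := (hMτ (0, 0)).offDiag₂
  have f₃ := (hMτ (0, 1)).offDiag₃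
  have f₄ := (hMτ (1, 1)).offDiag₂
  have g₁ := (hMτ (0, 2)).diag₁
  have g₂ := (hMτ (1, 1)).offDiag₃
  have g₃ := (hMτ (1, 0)).offDiag₂
  have g₄ := (hMτ (0, 0)).offDiag₃
  simp only [ptrans, (hM.row _).diag₁, (hM.row _).offDiag₁, (hM.row _).offDiag₂,
    (hM.row _).offDiag₃, (hM.col _).diag₁, (hM.col _).diag₂, (hM.col _).offDiag₁,
    (hM.col _).offDiag₂, (hM.col _).offDiag₃] at e₁ e₂ e₃ e₄ f₁ f₂ f₃ f₄ g₁ g₂ g₃ g₄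
  obtain ⟨h01, h23, h32⟩ := eq_zero_of_cycle (x := M (0, 0) (0, 1)) (y := M (1, 2) (2, 0))
    (z := M (2, 0) (1, 2)) h0 hlam12
    (by linear_combination e₁) (by linear_combination e₂) (by linear_combination e₃)
  obtain ⟨h02, h31, h13⟩ := eq_zero_of_cycle (x := M (0, 0) (1, 2)) (y := M (2, 0) (0, 1))
    (z := M (0, 1) (2, 0)) h0 hlam12
    (by linear_combination f₃) (by linear_combination f₁) (by linear_combination f₂)
  obtain ⟨h03, h12, h21⟩ := eq_zero_of_cycle (x := M (0, 0) (2, 0)) (y := M (0, 1) (1, 2))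
    (z := M (1, 2) (0, 1)) h0 hlam12
    (by linear_combination (lam : ℂ) ^ 2 * g₁) (by linear_combination g₃)
    (by linear_combination g₂)
  have h10 : M (0, 1) (0, 0) = 0 := by simpa [h01, h0] using e₄
  have h20 : M (1, 2) (0, 0) = 0 := by simpa [h02, h0] using f₄
  have h30 : M (2, 0) (0, 0) = 0 := by simpa [h03, h0] using g₄
  fin_cases a <;> fin_cases b <;> simp_all [repIdx]

theorem lam_sq_mul_apply_repIdx_self (hM : IsCompressedToRangeA lam M)
    (hMτ : ∀ p, MemRangeA lam (ptrans M p)) {a : Fin 4} (ha : a ≠ 0) :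
    (lam : ℂ) ^ 2 * M (repIdx a) (repIdx a) = M (0, 0) (0, 0) := by
  have d₁ := (hMτ (0, 0)).diag₁
  have d₂ := (hMτ (1, 2)).offDiag₂
  have d₃ := (hMτ (0, 0)).diag₂
  simp only [ptrans, (hM.row _).diag₂, (hM.row _).offDiag₁, (hM.col _).diag₁,
    (hM.col _).offDiag₃] at d₁ d₂ d₃
  fin_cases a
  · exact absurd rfl ha
  · exact d₁
  · exact d₂.symm
  · exact d₃

end IsCompressedToRangeA

theorem isCompressedToRangeA_Amat (hlm : lam * mu = 1) :
    IsCompressedToRangeA lam (Amat lam mu) :=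
  .of_isHermitian Amat_isHermitian (memRangeA_Amat hlm)

theorem eq_smul_Amat {B : Matrix (Fin 3 × Fin 3) (Fin 3 × Fin 3) ℂ} (hlm : lam * mu = 1)
    (hlam12 : (lam : ℂ) ^ 12 ≠ 1) (hB : IsCompressedToRangeA lam B)
    (hBτ : ∀ p, MemRangeA lam (ptrans B p)) : B = B (0, 0) (0, 0) • Amat lam mu := by
  have hlm' : (lam : ℂ) * mu = 1 := by exact_mod_cast hlm
  have h0 : (lam : ℂ) ≠ 0 := left_ne_zero_of_mul_eq_one hlm'
  refine hB.ext ((isCompressedToRangeA_Amat hlm).const_smul _) fun a b => ?_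
  rcases eq_or_ne a b with rfl | hab
  · rcases eq_or_ne a 0 with rfl | ha
    · simp [repIdx, Amat, vv, vecz, yMat, Fin.sum_univ_three]
    · have h := hB.lam_sq_mul_apply_repIdx_self hBτ ha
      have hdiag : B (repIdx a) (repIdx a) = B (0, 0) (0, 0) * (mu : ℂ) ^ 2 := by
        linear_combination (mu : ℂ) ^ 2 * h - B (repIdx a) (repIdx a) * (1 + lam * mu) * hlm'
      rw [hdiag]
      fin_cases a <;> simp [repIdx, Amat, vv, vecz, yMat, Fin.sum_univ_three, sq] at ha ⊢
  · rw [hB.apply_repIdx_eq_zero hBτ h0 hlam12 hab]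
    fin_cases a <;> fin_cases b <;> simp_all [repIdx, Amat, vv, vecz, yMat, Fin.sum_univ_three]

theorem stmt_12_general (lam mu : ℝ) (hl : 0 < lam) (hlm : lam * mu = 1)
    (hne : lam ≠ 1) :
    ∀ B : Matrix (Fin 3 × Fin 3) (Fin 3 × Fin 3) ℂ,
      B.PosSemidef → (ptrans B).PosSemidef →
      (Amat lam mu - B).PosSemidef → (ptrans (Amat lam mu - B)).PosSemidef →
      ∃ t : ℝ, 0 ≤ t ∧ B = (t : ℂ) • Amat lam mu := by
  intro B hB hBτ hAB hABτ
  have hker : ∀ v, Amat lam mu *ᵥ v = 0 → B *ᵥ v = 0 := fun _ =>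
    hB.mulVec_eq_zero_of_sub_posSemidef hAB
  have hkerτ : ∀ v, Amat lam mu *ᵥ v = 0 → ptrans B *ᵥ v = 0 := fun _ =>
    hBτ.mulVec_eq_zero_of_sub_posSemidef (N := Amat lam mu)
      (by rwa [ptrans_sub, ptrans_Amat hlm] at hABτ)
  have hlam12 : (lam : ℂ) ^ 12 ≠ 1 := by
    exact_mod_cast (pow_eq_one_iff_of_nonneg hl.le (by norm_num)).not.mpr hne
  have hBA := eq_smul_Amat hlm hlam12
    (.of_isHermitian hB.isHermitian (row_of_ker hlm hker)) (row_of_ker hlm hkerτ)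
  obtain ⟨t, ht, htB⟩ := RCLike.nonneg_iff_exists_ofReal.mp (hB.diag_nonneg (i := (0, 0)))
  exact ⟨t, ht, hBA.trans (congrArg (· • Amat lam mu) htB.symm)⟩

/-- `A` generates an extreme ray of the cone `𝕋` of PSD matrices with PSD
partial transpose: any `B ∈ 𝕋` with `A - B ∈ 𝕋` is a nonnegative multiple of `A`. -/
theorem stmt_12 (lam mu : ℝ) (hl : 0 < lam) (hm : 0 < mu) (hlm : lam * mu = 1)
    (hne : lam ≠ 1) :
    ∀ B : Matrix (Fin 3 × Fin 3) (Fin 3 × Fin 3) ℂ,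
      B.PosSemidef → (ptrans B).PosSemidef →
      (Amat lam mu - B).PosSemidef → (ptrans (Amat lam mu - B)).PosSemidef →
      ∃ t : ℝ, 0 ≤ t ∧ B = (t : ℂ) • Amat lam mu :=
  stmt_12_general lam mu hl hlm hne
end
end
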